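/- Let T be a triangulated category with products, and C, G two Σ-stable sets with Ψ(C)^s ⊆ Φ(G) for some s ∈ ℕ*. Then every map Y → Z in T with Z ∈ Prod_n(C) factors as Y → Z' → Z with Z' ∈ Prod_{n+s}(C) such that for every G ∈ G, the images of Hom_T(G,Y) → Hom_T(G,Z) and Hom_T(G,Z') → Hom_T(G,Z) coincide. -/

import Mathlib

open CategoryTheory CategoryTheory.Limits CategoryTheory.Pretriangulated

universe v u

variable {C : Type u} [Category.{v} C]

def SigmaStable [HasShift C ℤ] (S : Set C) : Prop :=
  ∀ X ∈ S, X⟦(1 : ℤ)⟧ ∈ S ∧ X⟦(-1 : ℤ)⟧ ∈ S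

def IsPhantom [Limits.HasZeroMorphisms C] (𝒢 : Set C) {X Y : C} (φ : X ⟶ Y) : Prop :=
  ∀ G ∈ 𝒢, ∀ f : G ⟶ X, f ≫ φ = 0

def IsCophantom [Limits.HasZeroMorphisms C] (𝒞 : Set C) {X Y : C} (ψ : X ⟶ Y) : Prop :=
  ∀ c ∈ 𝒞, ∀ g : Y ⟶ c, ψ ≫ g = 0

def ProdCls (𝒞 : Set C) : Set C :=
  {Z | ∃ (ι : Type (max u v)) (f : ι → C) (_ : ∀ i, f i ∈ 𝒞) (_ : HasProduct f)
    (r : (∏ᶜ f) ⟶ Z) (s : Z ⟶ ∏ᶜ f), s ≫ r = 𝟙 Z}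

/-- `ProdN 𝒞 n` is `Prod_{n+1}(𝒞)`. -/
def ProdN [Preadditive C] [HasZeroObject C] [HasShift C ℤ]
    [∀ n : ℤ, (shiftFunctor C n).Additive] [Pretriangulated C]
    (𝒞 : Set C) : ℕ → Set C
  | 0 => ProdCls 𝒞
  | n + 1 => {Y | ∃ (X Z : C) (f : X ⟶ Y) (g : Y ⟶ Z) (h : Z ⟶ X⟦(1 : ℤ)⟧),
      Triangle.mk f g h ∈ (distTriang C) ∧ X ∈ ProdCls 𝒞 ∧ Z ∈ ProdN 𝒞 n}

/-- composites of `n+1` maps satisfying `I`: the generators of the ideal `I^{n+1}`. -/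
def compPow (I : MorphismProperty C) : ℕ → MorphismProperty C
  | 0 => I
  | n + 1 => fun X Z f => ∃ (Y : C) (g : X ⟶ Y) (h : Y ⟶ Z),
      I g ∧ compPow I n h ∧ f = g ≫ h

/-!
Complete `e` to a distinguished triangle `Y ⟶ Z ⟶ V ⟶ Y⟦1⟧`. A map `V ⟶ P` to a product of
objects of `𝒞` through which every map `V ⟶ c ∈ 𝒞` factors has a `𝒞`-cophantom fibre
`W ⟶ V`. Taking the fibre `Z₁` of `Z ⟶ V ⟶ P` gives `Z₁ ∈ Prod_{n+1}(𝒞)` (as `P⟦-1⟧ ⟶ Z₁ ⟶ Z`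
is distinguished), `e` lifts to `Z₁`, and `Z₁ ⟶ Z ⟶ V` factors through `W ⟶ V`. Repeating this
`s` times, `Z' ⟶ Z ⟶ V` factors through a composite of `s` cophantoms, hence is a `𝒢`-phantom,
so by exactness every map `G ⟶ Z' ⟶ Z` factors through `e`.
-/

lemma compPow_comp_right (I : MorphismProperty C) :
    ∀ (k : ℕ) {X Y Z : C} (f : X ⟶ Y) (g : Y ⟶ Z),
      compPow I k f → I g → compPow I (k + 1) (f ≫ g)
  | 0, _, Y, _, f, g, hf, hg => ⟨Y, f, g, hf, hg, rfl⟩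
  | k + 1, _, _, _, _, g, hf, hg => by
      obtain ⟨W, p, q, hp, hq, rfl⟩ := hf
      exact ⟨W, p, q ≫ g, hp, compPow_comp_right I k q g hq hg, by simp⟩

def IsPreenvelope (𝒞 : Set C) {V P : C} (j : V ⟶ P) : Prop :=
  ∀ c ∈ 𝒞, ∀ g : V ⟶ c, ∃ p : P ⟶ c, j ≫ p = g

lemma IsPreenvelope.isCophantom {𝒞 : Set C} [HasZeroMorphisms C] {W V P : C} {j : V ⟶ P}
    (hj : IsPreenvelope 𝒞 j) {ψ : W ⟶ V} (hψ : ψ ≫ j = 0) : IsCophantom 𝒞 ψ := by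
  intro c hc g
  obtain ⟨p, rfl⟩ := hj c hc g
  rw [reassoc_of% hψ, zero_comp]

lemma exists_isPreenvelope [HasProducts.{max u v} C] (𝒞 : Set C) (V : C) :
    ∃ P ∈ ProdCls 𝒞, ∃ j : V ⟶ P, IsPreenvelope 𝒞 j := by
  let f : (Σ c : 𝒞, V ⟶ c) → C := fun p => p.1
  exact ⟨∏ᶜ f, ⟨_, f, fun p => p.1.2, inferInstance, 𝟙 _, 𝟙 _, Category.id_comp _⟩,
    Pi.lift Sigma.snd, fun c hc g => ⟨Pi.π f ⟨⟨c, hc⟩, g⟩, Pi.lift_π _ _⟩⟩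

lemma obj_mem_prodCls [HasProducts.{max u v} C] {𝒞 : Set C} (F : C ⥤ C)
    [PreservesLimitsOfSize.{max u v, max u v} F]
    (hF : ∀ X ∈ 𝒞, F.obj X ∈ 𝒞) {X : C} (hX : X ∈ ProdCls 𝒞) : F.obj X ∈ ProdCls 𝒞 := by
  obtain ⟨ι, f, hf, _, r, t, htr⟩ := hX
  refine ⟨ι, fun i => F.obj (f i), fun i => hF _ (hf i), inferInstance,
    (PreservesProduct.iso F f).inv ≫ F.map r, F.map t ≫ (PreservesProduct.iso F f).hom, ?_⟩
  rw [Category.assoc, Iso.hom_inv_id_assoc, ← F.map_comp, htr, F.map_id]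

section Pretriangulated

variable [Preadditive C] [HasZeroObject C] [HasShift C ℤ]
  [∀ n : ℤ, (shiftFunctor C n).Additive] [Pretriangulated C]

lemma Triangle.exists_lift_comp_hom₁_eq_zero {T T' : Triangle C} (hT : T ∈ distTriang C)
    (hT' : T' ∈ distTriang C) (φ : T ⟶ T') [IsIso φ.hom₃] {Y : C} (a : Y ⟶ T.obj₂)
    (ha : a ≫ φ.hom₂ = 0) : ∃ a₁ : Y ⟶ T.obj₁, a₁ ≫ T.mor₁ = a ∧ a₁ ≫ φ.hom₁ = 0 := by
  let ι : T.obj₃⟦(-1 : ℤ)⟧ ⟶ T.obj₁ := T.invRotate.mor₁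
  let ι' : T'.obj₃⟦(-1 : ℤ)⟧ ⟶ T'.obj₁ := T'.invRotate.mor₁
  have hι : ι ≫ T.mor₁ = 0 := comp_distTriang_mor_zero₁₂ _ (inv_rot_of_distTriang _ hT)
  have hιφ : ι ≫ φ.hom₁ = φ.hom₃⟦(-1 : ℤ)⟧' ≫ ι' := ((invRotate C).map φ).comm₁
  have haT : a ≫ T.mor₂ = 0 := (cancel_mono φ.hom₃).1 <| by
    rw [Category.assoc, φ.comm₂, reassoc_of% ha, zero_comp, zero_comp]
  obtain ⟨a₀, rfl⟩ := Triangle.coyoneda_exact₂ T hT a haT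
  have ha₀ : (a₀ ≫ φ.hom₁) ≫ T'.mor₁ = 0 := by
    rwa [Category.assoc, ← φ.comm₁, ← Category.assoc]
  obtain ⟨ε, hε⟩ : ∃ ε : Y ⟶ T'.obj₃⟦(-1 : ℤ)⟧, a₀ ≫ φ.hom₁ = ε ≫ ι' :=
    Triangle.coyoneda_exact₂ _ (inv_rot_of_distTriang _ hT') _ ha₀
  -- Correct the lift `a₀` by a map factoring through `ι`, which is invisible in `T.obj₂`.
  refine ⟨a₀ - ε ≫ (inv φ.hom₃)⟦(-1 : ℤ)⟧' ≫ ι, ?_, ?_⟩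
  · rw [Preadditive.sub_comp, Category.assoc, Category.assoc, hι, comp_zero, comp_zero, sub_zero]
  · rw [Preadditive.sub_comp, Category.assoc, Category.assoc, hιφ, ← Functor.map_comp_assoc,
      IsIso.inv_hom_id, CategoryTheory.Functor.map_id, Category.id_comp, ← hε, sub_self]

lemma exists_cophantom_step [HasProducts.{max u v} C] {𝒞 : Set C} (h𝒞 : SigmaStable 𝒞)
    {m : ℕ} {Y Z V : C} (hZ : Z ∈ ProdN 𝒞 m) (τ : Z ⟶ V) (a : Y ⟶ Z) (ha : a ≫ τ = 0) :
    ∃ (Z₁ W : C) (b : Z₁ ⟶ Z) (τ₁ : Z₁ ⟶ W) (ψ : W ⟶ V) (a₁ : Y ⟶ Z₁),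
      Z₁ ∈ ProdN 𝒞 (m + 1) ∧ IsCophantom 𝒞 ψ ∧ a₁ ≫ b = a ∧ a₁ ≫ τ₁ = 0 ∧
        b ≫ τ = τ₁ ≫ ψ := by
  obtain ⟨P, hP, j, hj⟩ := exists_isPreenvelope 𝒞 V
  obtain ⟨W, ψ, q, hW⟩ := distinguished_cocone_triangle₁ j
  obtain ⟨Z₁, b, d, hZ₁⟩ := distinguished_cocone_triangle₁ (τ ≫ j)
  obtain ⟨τ₁, h₁, h₃⟩ := complete_distinguished_triangle_morphism₁ _ _ hZ₁ hW τ (𝟙 P)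
    (Category.comp_id _)
  let φ := Triangle.homMk _ _ τ₁ τ (𝟙 P) h₁ (Category.comp_id _) h₃
  have : IsIso φ.hom₃ := inferInstanceAs (IsIso (𝟙 P))
  obtain ⟨a₁, hab, haτ⟩ := Triangle.exists_lift_comp_hom₁_eq_zero hZ₁ hW φ a ha
  have hP' : P⟦(-1 : ℤ)⟧ ∈ ProdCls 𝒞 :=
    obj_mem_prodCls (shiftFunctor C (-1 : ℤ)) (fun X hX => (h𝒞 X hX).2) hP
  exact ⟨Z₁, W, b, τ₁, ψ, a₁, ⟨_, _, _, _, _, inv_rot_of_distTriang _ hZ₁, hP', hZ⟩,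
    hj.isCophantom (comp_distTriang_mor_zero₁₂ _ hW), hab, haτ, h₁⟩

lemma exists_cophantom_tower [HasProducts.{max u v} C] {𝒞 : Set C} (h𝒞 : SigmaStable 𝒞)
    (k : ℕ) {m : ℕ} {Y Z V : C} (hZ : Z ∈ ProdN 𝒞 m) (τ : Z ⟶ V) (a : Y ⟶ Z)
    (ha : a ≫ τ = 0) :
    ∃ (Z' : C) (a' : Y ⟶ Z') (b : Z' ⟶ Z) (W : C) (σ : Z' ⟶ W) (ψ : W ⟶ V),
      Z' ∈ ProdN 𝒞 (m + k + 1) ∧ a' ≫ b = a ∧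
        compPow (fun _ _ ψ => IsCophantom 𝒞 ψ) k ψ ∧ b ≫ τ = σ ≫ ψ := by
  induction k generalizing m Y Z V with
  | zero =>
    obtain ⟨Z₁, W, b, τ₁, ψ, a₁, hZ₁, hψ, hab, -, hbτ⟩ := exists_cophantom_step h𝒞 hZ τ a ha
    exact ⟨Z₁, a₁, b, W, τ₁, ψ, hZ₁, hab, hψ, hbτ⟩
  | succ k ih =>
    obtain ⟨Z₁, W₁, b₁, τ₁, ψ₁, a₁, hZ₁, hψ₁, hab₁, haτ₁, hbτ₁⟩ :=
      exists_cophantom_step h𝒞 hZ τ a ha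
    obtain ⟨Z', a', b, W, σ, ψ, hZ', hab, hψ, hbτ⟩ := ih hZ₁ τ₁ a₁ haτ₁
    refine ⟨Z', a', b ≫ b₁, W, σ, ψ ≫ ψ₁, by rwa [show m + (k + 1) + 1 = m + 1 + k + 1 by omega],
      by rw [reassoc_of% hab, hab₁],
      compPow_comp_right _ k ψ ψ₁ hψ hψ₁, by simp [hbτ₁, reassoc_of% hbτ]⟩

lemma range_comp_mor₁_eq_of_isPhantom {𝒢 : Set C} {T : Triangle C} (hT : T ∈ distTriang C)
    {Z' : C} {a : T.obj₁ ⟶ Z'} {b : Z' ⟶ T.obj₂} (hab : a ≫ b = T.mor₁)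
    (hb : IsPhantom 𝒢 (b ≫ T.mor₂)) {G : C} (hG : G ∈ 𝒢) :
    Set.range (fun f : G ⟶ T.obj₁ => f ≫ T.mor₁) = Set.range (fun f : G ⟶ Z' => f ≫ b) := by
  apply Set.Subset.antisymm
  · rintro _ ⟨f, rfl⟩
    exact ⟨f ≫ a, by simp [hab]⟩
  · rintro _ ⟨f, rfl⟩
    obtain ⟨g, hg⟩ := Triangle.coyoneda_exact₂ _ hT (f ≫ b) (by simpa using hb G hG f)
    exact ⟨g, hg.symm⟩

end Pretriangulated

/-- If `Ψ(𝒞)^s ⊆ Φ(𝒢)` then every map `Y ⟶ Z` with `Z ∈ Prod_n(𝒞)` factors as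
`Y ⟶ Z' ⟶ Z` with `Z' ∈ Prod_{n+s}(𝒞)`, such that for each `G ∈ 𝒢` the images of
`Hom(G,Y) → Hom(G,Z)` and `Hom(G,Z') → Hom(G,Z)` coincide. -/
theorem stmt8 [Preadditive C] [HasZeroObject C] [HasShift C ℤ]
    [∀ n : ℤ, (shiftFunctor C n).Additive] [Pretriangulated C]
    [HasProducts.{max u v} C]
    (𝒞 𝒢 : Set C) (h𝒞 : SigmaStable 𝒞) (h𝒢 : SigmaStable 𝒢)
    (s : ℕ) (hs : 1 ≤ s)
    (hPow : ∀ ⦃X Y : C⦄ (f : X ⟶ Y),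
      compPow (fun _ _ ψ => IsCophantom 𝒞 ψ) (s - 1) f → IsPhantom 𝒢 f)
    (n : ℕ) (hn : 1 ≤ n) {Y Z : C} (hZ : Z ∈ ProdN 𝒞 (n - 1)) (e : Y ⟶ Z) :
    ∃ (Z' : C) (a : Y ⟶ Z') (b : Z' ⟶ Z), Z' ∈ ProdN 𝒞 (n + s - 1) ∧ a ≫ b = e ∧
      ∀ G ∈ 𝒢, Set.range (fun f : G ⟶ Y => f ≫ e) =
        Set.range (fun f : G ⟶ Z' => f ≫ b) := by
  obtain ⟨V, u, w, hT⟩ := distinguished_cocone_triangle e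
  obtain ⟨Z', a, b, W, σ, ψ, hZ', hab, hψ, hbu⟩ :=
    exists_cophantom_tower h𝒞 (s - 1) hZ u e (comp_distTriang_mor_zero₁₂ _ hT)
  have hb : IsPhantom 𝒢 (b ≫ u) := fun G hG f => by
    rw [hbu, ← Category.assoc]
    exact hPow ψ hψ G hG _
  refine ⟨Z', a, b, by rwa [show n + s - 1 = n - 1 + (s - 1) + 1 by omega], hab,
    fun G hG => range_comp_mor₁_eq_of_isPhantom hT hab hb hG⟩
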